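/- arXiv:2002.04491 — 3 statements merged into one kernel-verified Lean document; each statement's English description precedes it below -/
import Mathlib

section
/- For any nonzero Tate series f = ∑ a_i X^i in K{X}°, the maximum of the terms a_i X^i with respect to the term preorder ≤ is achieved and is unique up to equivalence of terms; i.e. the leading term LT(f) is well-defined as an element of the monoid of integral Tate terms up to equivalence. -/
open MvPowerSeries

namespace TateStmt

variable {n : ℕ} {O : Type*} [CommRing O]

/-- The Tate condition: the (π-adic) valuations of the coefficients tend to infinity. -/
def IsTate (π : O) (f : MvPowerSeries (Fin n) O) : Prop :=
  ∀ N : ℕ, {i : Fin n →₀ ℕ | ¬ π ^ N ∣ MvPowerSeries.coeff i f}.Finite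

/-- The integral Tate algebra `K{X}°`, as a subring of the ring of formal power series
over the valuation ring `O = K°`. -/
def TateAlgebra (n : ℕ) (O : Type*) [CommRing O] (π : O) :
    Subring (MvPowerSeries (Fin n) O) where
  carrier := {f | IsTate π f}
  zero_mem' := by
    intro N
    apply Set.Finite.subset (Set.finite_empty)
    intro i hi
    exact hi (Dvd.intro 0 (by simp))
  one_mem' := by
    intro N
    apply Set.Finite.subset (Set.finite_singleton (0 : Fin n →₀ ℕ))
    intro i hi
    by_contra h
    rw [Set.mem_singleton_iff] at h
    apply hi
    rw [MvPowerSeries.coeff_one, if_neg h]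
    exact Dvd.intro 0 (by simp)
  add_mem' := by
    intro f g hf hg N
    apply Set.Finite.subset ((hf N).union (hg N))
    intro i hi
    by_contra h
    simp only [Set.mem_union, Set.mem_setOf_eq, not_or, not_not] at h
    exact hi (by rw [map_add]; exact dvd_add h.1 h.2)
  neg_mem' := by
    intro f hf N
    apply Set.Finite.subset (hf N)
    intro i hi
    by_contra h
    simp only [Set.mem_setOf_eq, not_not] at h
    exact hi (by rw [map_neg]; exact (dvd_neg).mpr h)
  mul_mem' := by
    intro f g hf hg N
    apply Set.Finite.subset (Set.Finite.add (hf N) (hg N))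
    intro i hi
    by_contra h
    apply hi
    rw [MvPowerSeries.coeff_mul]
    apply Finset.dvd_sum
    intro p hp
    rw [Finset.HasAntidiagonal.mem_antidiagonal] at hp
    by_cases h1 : π ^ N ∣ MvPowerSeries.coeff p.1 f
    · exact Dvd.dvd.mul_right h1 _
    · by_cases h2 : π ^ N ∣ MvPowerSeries.coeff p.2 g
      · exact Dvd.dvd.mul_left h2 _
      · exact absurd (hp ▸ Set.add_mem_add h1 h2) h

/-- Tate monomials `π^a X^i`, identified with pairs `(a, i) ∈ ℕ × ℕ^n`. -/
abbrev TMon (n : ℕ) := ℕ × (Fin n →₀ ℕ)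

noncomputable def monMul (a b : TMon n) : TMon n := (a.1 + b.1, a.2 + b.2)
def monDvd (a b : TMon n) : Prop := a.1 ≤ b.1 ∧ a.2 ≤ b.2
noncomputable def monDiv (a b : TMon n) : TMon n := (a.1 - b.1, a.2 - b.2)
noncomputable def monLcm (a b : TMon n) : TMon n := (max a.1 b.1, a.2 ⊔ b.2)

/-- The valuation-first term order: compare valuations first (a *smaller* valuation gives a
*larger* term), then exponents via the monomial order `mo`. -/
def termLT (mo : MonomialOrder (Fin n)) (a b : TMon n) : Prop :=
  b.1 < a.1 ∨ (a.1 = b.1 ∧ mo.toSyn a.2 < mo.toSyn b.2)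

def termLE (mo : MonomialOrder (Fin n)) (a b : TMon n) : Prop :=
  a = b ∨ termLT mo a b

/-- Order on `Option (TMon n)`, where `none` (the "monomial" of `0`) is smallest. -/
def optLT (mo : MonomialOrder (Fin n)) : Option (TMon n) → Option (TMon n) → Prop
  | none, none => False
  | none, some _ => True
  | some _, none => False
  | some a, some b => termLT mo a b

def optLE (mo : MonomialOrder (Fin n)) (a b : Option (TMon n)) : Prop :=
  a = b ∨ optLT mo a b

noncomputable def optMul (t : TMon n) : Option (TMon n) → Option (TMon n)
  | none => none
  | some a => some (monMul t a)

/-- `(a, i)` is (the monomial of) a term of `f`: the coefficient of `X^i` has valuation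
exactly `a`. -/
def IsTerm (π : O) (f : MvPowerSeries (Fin n) O) (m : TMon n) : Prop :=
  π ^ m.1 ∣ MvPowerSeries.coeff m.2 f ∧ ¬ π ^ (m.1 + 1) ∣ MvPowerSeries.coeff m.2 f

/-- `m` is the leading monomial of `f`. -/
def IsLM (π : O) (mo : MonomialOrder (Fin n)) (f : MvPowerSeries (Fin n) O) (m : TMon n) :
    Prop :=
  IsTerm π f m ∧ ∀ m', IsTerm π f m' → termLE mo m' m

/-- `s` is the leading monomial of `f`, with the convention `LM 0 = none`. -/
def IsLMopt (π : O) (mo : MonomialOrder (Fin n)) (f : MvPowerSeries (Fin n) O) :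
    Option (TMon n) → Prop
  | none => f = 0
  | some m => IsLM π mo f m

/-- All coefficients of `f` are divisible by `π^N`, i.e. `val f ≥ N`. -/
def DvdAll (π : O) (N : ℕ) (f : MvPowerSeries (Fin n) O) : Prop :=
  ∀ i, π ^ N ∣ MvPowerSeries.coeff i f

/-- The Gauss valuation of `f` is exactly `N`. -/
def ValEq (π : O) (f : MvPowerSeries (Fin n) O) (N : ℕ) : Prop :=
  DvdAll π N f ∧ ¬ DvdAll π (N + 1) f

/-- `G` is a Gröbner basis of the ideal `I` of the (integral) Tate algebra. -/
def IsGB (π : O) (mo : MonomialOrder (Fin n)) (G : Set (TateAlgebra n O π))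
    (I : Ideal (TateAlgebra n O π)) : Prop :=
  (∀ g ∈ G, g ∈ I) ∧
    ∀ f ∈ I, (f : MvPowerSeries (Fin n) O) ≠ 0 → ∀ mf,
      IsLM π mo (f : MvPowerSeries (Fin n) O) mf →
        ∃ g ∈ G, ∃ mg, IsLM π mo (g : MvPowerSeries (Fin n) O) mg ∧ monDvd mg mf

/-- The module `M = {(u,v) : u f - v ∈ I₀}`. -/
def SigMod {π : O} (I0 : Ideal (TateAlgebra n O π)) (f : TateAlgebra n O π) :
    Set (TateAlgebra n O π × TateAlgebra n O π) :=
  {p | p.1 * f - p.2 ∈ I0}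

/-- `p = (u₁,v₁)` is top-reducible by `q = (u₂,v₂)`. -/
def TopRed (π : O) (mo : MonomialOrder (Fin n))
    (p q : TateAlgebra n O π × TateAlgebra n O π) : Prop :=
  (q.2 = 0 ∧ ∃ mu mq, IsLM π mo (p.1 : MvPowerSeries (Fin n) O) mu ∧
      IsLM π mo (q.1 : MvPowerSeries (Fin n) O) mq ∧ monDvd mq mu)
  ∨ (p.2 ≠ 0 ∧ q.2 ≠ 0 ∧
      ∃ m1 m2, IsLM π mo (p.2 : MvPowerSeries (Fin n) O) m1 ∧
        IsLM π mo (q.2 : MvPowerSeries (Fin n) O) m2 ∧ monDvd m2 m1 ∧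
        ∃ s1 s2, IsLMopt π mo (p.1 : MvPowerSeries (Fin n) O) s1 ∧
          IsLMopt π mo (q.1 : MvPowerSeries (Fin n) O) s2 ∧
          optLE mo (optMul (monDiv m1 m2) s2) s1)

/-- `G` is a strong Gröbner basis of the module `M = SigMod I0 f`. -/
def IsSGB (π : O) (mo : MonomialOrder (Fin n)) (I0 : Ideal (TateAlgebra n O π))
    (f : TateAlgebra n O π) (G : Set (TateAlgebra n O π × TateAlgebra n O π)) : Prop :=
  G.Finite ∧ G ⊆ SigMod I0 f ∧
    ∀ p ∈ SigMod I0 f, p ≠ 0 → ∃ q ∈ G, TopRed π mo p q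

/-- `p` is covered by `q`. -/
def Covers (π : O) (mo : MonomialOrder (Fin n))
    (q p : TateAlgebra n O π × TateAlgebra n O π) : Prop :=
  ∃ mu mq, IsLM π mo (p.1 : MvPowerSeries (Fin n) O) mu ∧
    IsLM π mo (q.1 : MvPowerSeries (Fin n) O) mq ∧ monDvd mq mu ∧
    ∃ sv sp, IsLMopt π mo (q.2 : MvPowerSeries (Fin n) O) sv ∧
      IsLMopt π mo (p.2 : MvPowerSeries (Fin n) O) sp ∧
      optLT mo (optMul (monDiv mu mq) sv) sp

def CoveredBy (π : O) (mo : MonomialOrder (Fin n))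
    (p : TateAlgebra n O π × TateAlgebra n O π)
    (G : Set (TateAlgebra n O π × TateAlgebra n O π)) : Prop :=
  ∃ q ∈ G, Covers π mo q p

/-- The Tate series `π^a X^i`, as an element of the Tate algebra. -/
noncomputable def monTA (π : O) (m : TMon n) : TateAlgebra n O π :=
  ⟨MvPowerSeries.monomial m.2 (π ^ m.1), by
    intro N
    apply Set.Finite.subset (Set.finite_singleton m.2)
    intro i hi
    by_contra h
    rw [Set.mem_singleton_iff] at h
    apply hi
    rw [MvPowerSeries.coeff_monomial, if_neg h]
    exact Dvd.intro 0 (by simp)⟩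

noncomputable def smulPair (π : O) (m : TMon n) (p : TateAlgebra n O π × TateAlgebra n O π) :
    TateAlgebra n O π × TateAlgebra n O π :=
  (monTA π m * p.1, monTA π m * p.2)

/-- `r` is the J-pair of `(p, q)` (with `p` carrying the larger signature part). -/
def IsJPair (π : O) (mo : MonomialOrder (Fin n))
    (p q r : TateAlgebra n O π × TateAlgebra n O π) : Prop :=
  ∃ m1 m2, IsLM π mo (p.2 : MvPowerSeries (Fin n) O) m1 ∧
    IsLM π mo (q.2 : MvPowerSeries (Fin n) O) m2 ∧
    (∃ s1 s2, IsLMopt π mo (p.1 : MvPowerSeries (Fin n) O) s1 ∧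
      IsLMopt π mo (q.1 : MvPowerSeries (Fin n) O) s2 ∧
      optLT mo (optMul (monDiv (monLcm m1 m2) m2) s2)
        (optMul (monDiv (monLcm m1 m2) m1) s1)) ∧
    r = smulPair π (monDiv (monLcm m1 m2) m1) p

section Residue

variable {k : Type*} [Field k]

/-- `P = ρ(f)`, the reduction mod `π` of `π^{-val f} f`. -/
def IsRho (π : O) (φ : O →+* k) (f : MvPowerSeries (Fin n) O)
    (P : MvPolynomial (Fin n) k) : Prop :=
  ∃ (N : ℕ) (g : MvPowerSeries (Fin n) O), f = (π ^ N) • g ∧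
    (∃ i, ¬ π ∣ MvPowerSeries.coeff i g) ∧
    ∀ i, MvPolynomial.coeff i P = φ (MvPowerSeries.coeff i g)

def rhoSet (π : O) (φ : O →+* k) (S : Set (TateAlgebra n O π)) :
    Set (MvPolynomial (Fin n) k) :=
  {P | ∃ f ∈ S, IsRho π φ (f : MvPowerSeries (Fin n) O) P}

/-- `Ī_N`: the image in `k[X]` of `π^{-N} (I ∩ π^N K{X}°)`. -/
def BarIdeal (π : O) (φ : O →+* k) (I : Ideal (TateAlgebra n O π)) (N : ℕ) :
    Set (MvPolynomial (Fin n) k) :=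
  {P | ∃ f ∈ I, ∃ g : MvPowerSeries (Fin n) O, (f : MvPowerSeries (Fin n) O) = (π ^ N) • g ∧
    ∀ i, MvPolynomial.coeff i P = φ (MvPowerSeries.coeff i g)}

/-- `d` is the leading exponent of the polynomial `P` for the monomial order `mo`. -/
def IsPolyLM (mo : MonomialOrder (Fin n)) (P : MvPolynomial (Fin n) k)
    (d : Fin n →₀ ℕ) : Prop :=
  MvPolynomial.coeff d P ≠ 0 ∧ ∀ e, MvPolynomial.coeff e P ≠ 0 → mo.toSyn e ≤ mo.toSyn d

/-- `G` is a Gröbner basis of the set (ideal) `J` of polynomials over the residue field. -/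
def IsPolyGB (mo : MonomialOrder (Fin n)) (G : Set (MvPolynomial (Fin n) k))
    (J : Set (MvPolynomial (Fin n) k)) : Prop :=
  G ⊆ J ∧ ∀ P ∈ J, P ≠ 0 → ∀ d, IsPolyLM mo P d →
    ∃ Q ∈ G, ∃ e, IsPolyLM mo Q e ∧ e ≤ d

end Residue

end TateStmt


open TateStmt MvPowerSeries

variable {n : ℕ} {O : Type*} [CommRing O] [IsDomain O] [IsDiscreteValuationRing O]

namespace TateStmt

lemma termLE_iff (mo : MonomialOrder (Fin n)) {a b : TMon n} :
    termLE mo a b ↔ b.1 < a.1 ∨ (a.1 = b.1 ∧ mo.toSyn a.2 ≤ mo.toSyn b.2) := by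
  constructor
  · rintro (rfl | hlt | ⟨hfst, hsnd⟩)
    · exact Or.inr ⟨rfl, le_rfl⟩
    · exact Or.inl hlt
    · exact Or.inr ⟨hfst, hsnd.le⟩
  · rintro (hlt | ⟨hfst, hsnd⟩)
    · exact Or.inr (Or.inl hlt)
    · rcases hsnd.lt_or_eq with hsnd | hsnd
      · exact Or.inr (Or.inr ⟨hfst, hsnd⟩)
      · exact Or.inl (Prod.ext hfst (mo.toSyn.injective hsnd))

lemma termLE_antisymm (mo : MonomialOrder (Fin n)) {a b : TMon n}
    (hab : termLE mo a b) (hba : termLE mo b a) : a = b := by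
  rw [termLE_iff] at hab hba
  rcases hab with hab | ⟨hfst, hab⟩
  · rcases hba with hba | ⟨hfst, -⟩ <;> omega
  rcases hba with hba | ⟨-, hba⟩
  · omega
  · exact Prod.ext hfst (mo.toSyn.injective (hab.antisymm hba))

lemma IsLM.unique {O : Type*} [CommRing O] {π : O} {mo : MonomialOrder (Fin n)}
    {f : MvPowerSeries (Fin n) O} {m m' : TMon n}
    (hm : IsLM π mo f m) (hm' : IsLM π mo f m') : m = m' :=
  termLE_antisymm mo (hm'.2 m hm.1) (hm.2 m' hm'.1)

lemma exists_isTerm_of_coeff_ne_zero {O : Type*} [CommRing O] [IsDomain O] [WfDvdMonoid O]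
    {π : O} (hπ : ¬IsUnit π) {f : MvPowerSeries (Fin n) O} {i : Fin n →₀ ℕ}
    (hi : coeff i f ≠ 0) : ∃ a, IsTerm π f (a, i) :=
  ⟨multiplicity π (coeff i f), pow_multiplicity_dvd _ _,
    (FiniteMultiplicity.of_not_isUnit hπ hi).not_pow_dvd_of_multiplicity_lt (lt_add_one _)⟩

lemma IsTate.finite_isTerm {O : Type*} [CommRing O] {π : O} {f : MvPowerSeries (Fin n) O}
    (hf : IsTate π f) (a : ℕ) : {i | IsTerm π f (a, i)}.Finite :=
  (hf (a + 1)).subset fun _ hi => hi.2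

/-- The leading monomial has the least valuation `N` occurring among the terms of `f`, and
among the finitely many terms of valuation `N` the largest exponent for `mo`. -/
lemma IsTate.exists_isLM {O : Type*} [CommRing O] {π : O} (mo : MonomialOrder (Fin n))
    {f : MvPowerSeries (Fin n) O} (hf : IsTate π f) (hval : ∃ a i, IsTerm π f (a, i)) :
    ∃ m, IsLM π mo f m := by
  classical
  set N := Nat.find hval
  obtain ⟨i, hi, hmax⟩ := Set.exists_max_image _ mo.toSyn (hf.finite_isTerm N)
    (Nat.find_spec hval)
  refine ⟨(N, i), hi, fun ⟨a, j⟩ hm => (termLE_iff mo).2 ?_⟩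
  rcases (Nat.find_min' hval ⟨j, hm⟩).lt_or_eq with hlt | hfst
  · exact Or.inl hlt
  · exact Or.inr ⟨hfst.symm, hmax j (by rwa [Set.mem_setOf_eq, show N = a from hfst])⟩

end TateStmt

/-- for any nonzero Tate series `f ∈ K{X}°`, the maximum of its terms with
respect to the term preorder is achieved and unique up to equivalence of terms, i.e. the
leading term of `f` is well defined as an element of the monoid `ℕ × ℕ^n` of integral Tate
terms up to equivalence. -/
theorem statement_2 (π : O) (hπ : Irreducible π) (mo : MonomialOrder (Fin n))
    (f : TateAlgebra n O π) (hf : (f : MvPowerSeries (Fin n) O) ≠ 0) :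
    ∃! m : TMon n, IsLM π mo (f : MvPowerSeries (Fin n) O) m := by
  obtain ⟨i, hi⟩ : ∃ i, coeff i (f : MvPowerSeries (Fin n) O) ≠ 0 := by
    by_contra! h
    exact hf (MvPowerSeries.ext h)
  obtain ⟨a, ha⟩ := exists_isTerm_of_coeff_ne_zero hπ.not_isUnit hi
  obtain ⟨m, hm⟩ := f.2.exists_isLM mo ⟨a, i, ha⟩
  exact ⟨m, hm, fun m' hm' => hm'.unique hm⟩
end

section
/- Let f_1,…,f_m generate an ideal I_0 ⊆ k[X], let f ∈ k[X], and let u_1,…,u_s generate the colon ideal (I_0 : f). For each i write -u_i f = a_{i,1} f_1 + … + a_{i,m} f_m, and set z_i = (a_{i,1},…,a_{i,m}, u_i), which is a syzygy of (f_1,…,f_m,f). Then the syzygy module Syz(f_1,…,f_m,f) equals (Syz(f_1,…,f_m) × {0}) + ⟨z_1,…,z_s⟩. -/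
/-- let `f₁,…,f_m` generate `I₀ ⊆ k[X]`, `f ∈ k[X]`, `u₁,…,u_s` generate
the colon ideal `(I₀ : f)`, and for each `j` write `-u_j f = ∑ l A j l * f l`, so that
`z_j = (A j 1, …, A j m, u j)` is a syzygy of `(f₁,…,f_m,f)`. Then
`Syz(f₁,…,f_m,f) = (Syz(f₁,…,f_m) × {0}) + ⟨z₁,…,z_s⟩`. -/
theorem statement_4 {n m s : ℕ} {k : Type*} [Field k]
    (f : Fin m → MvPolynomial (Fin n) k) (f0 : MvPolynomial (Fin n) k)
    (u : Fin s → MvPolynomial (Fin n) k)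
    (hu : Ideal.span (Set.range u) =
      Submodule.colon (Ideal.span (Set.range f)) (Ideal.span {f0}))
    (A : Fin s → Fin m → MvPolynomial (Fin n) k)
    (hA : ∀ j, - (u j * f0) = ∑ l, A j l * f l) :
    {a : Fin (m + 1) → MvPolynomial (Fin n) k | ∑ l, a l * (Fin.snoc f f0 : Fin (m + 1) → MvPolynomial (Fin n) k) l = 0} =
      {b : Fin (m + 1) → MvPolynomial (Fin n) k |
        ∃ a : Fin m → MvPolynomial (Fin n) k, (∑ l, a l * f l = 0) ∧
          ∃ c : Fin s → MvPolynomial (Fin n) k,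
            b = Fin.snoc a 0 +
              ∑ j, c j • (Fin.snoc (A j) (u j) : Fin (m + 1) → MvPolynomial (Fin n) k)} := by
  have swap : ∀ c : Fin s → MvPolynomial (Fin n) k,
      ∑ l : Fin m, (∑ j, c j * A j l) * f l = ∑ j, c j * ∑ l, A j l * f l := by
    intro c
    simp_rw [Finset.sum_mul, Finset.mul_sum, mul_assoc]
    exact Finset.sum_comm
  ext b
  simp only [Set.mem_setOf_eq]
  constructor
  · intro hb
    rw [Fin.sum_univ_castSucc] at hb
    simp only [Fin.snoc_castSucc, Fin.snoc_last] at hb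
    have hmem : b (Fin.last m) ∈ Ideal.span (Set.range u) := by
      rw [hu, Ideal.mem_colon_span_singleton]
      have he : b (Fin.last m) * f0 = -∑ l : Fin m, b l.castSucc * f l := by
        linear_combination hb
      rw [he]
      exact neg_mem (Ideal.sum_mem _ fun l _ =>
        Ideal.mul_mem_left _ _ (Ideal.subset_span ⟨l, rfl⟩))
    obtain ⟨c, hc⟩ := (Submodule.mem_span_range_iff_exists_fun _).mp hmem
    simp only [smul_eq_mul] at hc
    refine ⟨fun l => b l.castSucc - ∑ j, c j * A j l, ?_, c, ?_⟩
    · simp only [sub_mul]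
      rw [Finset.sum_sub_distrib, swap]
      simp_rw [fun j => (hA j).symm, mul_neg, ← mul_assoc]
      rw [Finset.sum_neg_distrib, sub_neg_eq_add, ← Finset.sum_mul, hc]
      linear_combination hb
    · funext x
      simp only [Pi.add_apply, Finset.sum_apply, Pi.smul_apply, smul_eq_mul]
      refine Fin.lastCases ?_ ?_ x
      · simp [hc]
      · intro i; simp [Fin.snoc_castSucc]
  · rintro ⟨a, ha, c, rfl⟩
    rw [Fin.sum_univ_castSucc]
    simp only [Pi.add_apply, Finset.sum_apply, Pi.smul_apply, smul_eq_mul,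
      Fin.snoc_castSucc, Fin.snoc_last, zero_add]
    simp only [add_mul]
    rw [Finset.sum_add_distrib, swap, ha, zero_add]
    simp_rw [fun j => (hA j).symm, mul_neg, ← mul_assoc]
    rw [Finset.sum_neg_distrib, ← Finset.sum_mul]
    ring
end

section
/- Let I_0 be an ideal of K{X}°, f ∈ K{X}°, I = I_0 + ⟨f⟩, and M = {(u,v) ∈ K{X}° × K{X}° : uf - v ∈ I_0}. If G is a strong Gröbner basis of M, then {v : (u,v) ∈ G for some u} is a Gröbner basis of I. -/
open MvPowerSeries

/-!
Let `g ∈ I` have leading monomial `m` and suppose no `v` with `(u, v) ∈ G` has a leading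
monomial dividing `m`. Then for every `u` with `(u, g) ∈ M` the top-reduction of `(u, g)` by `G`
must be by a syzygy `(q, 0)`, and subtracting a term multiple of `q` lowers `LM u` while keeping
`(u, g) ∈ M`. The term order is well-founded on terms of bounded valuation, so this yields `u` of
valuation larger than that of `m`. Then `h = g - u f ∈ I₀` still has leading monomial `m`, and
top-reducing `(0, h) ∈ M` by `G` produces the forbidden `v`.
-/

theorem Nat.exists_lt_and_not_succ {P : ℕ → Prop} (h0 : P 0) {N : ℕ} (hN : ¬ P N) :
    ∃ a < N, P a ∧ ¬ P (a + 1) := by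
  induction N with
  | zero => exact absurd h0 hN
  | succ N ih =>
    by_cases hP : P N
    · exact ⟨N, N.lt_succ_self, hP, hN⟩
    · obtain ⟨a, ha, h⟩ := ih hP
      exact ⟨a, by omega, h⟩

theorem Irreducible.isUnit_of_not_dvd {O : Type*} [CommRing O] [IsDomain O]
    [IsDiscreteValuationRing O] {π w : O} (hπ : Irreducible π) (h : ¬ π ∣ w) : IsUnit w := by
  by_contra hw
  have hmem : w ∈ IsLocalRing.maximalIdeal O := (IsLocalRing.mem_maximalIdeal w).mpr hw
  rw [hπ.maximalIdeal_eq, Ideal.mem_span_singleton] at hmem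
  exact h hmem

theorem Ideal.exists_mul_sub_mem_of_mem_sup_span_singleton {R : Type*} [CommRing R]
    {I : Ideal R} {f g : R} (hg : g ∈ I ⊔ Ideal.span {f}) : ∃ t, t * f - g ∈ I := by
  obtain ⟨t, b, hb, rfl⟩ := Ideal.mem_span_singleton_sup.mp (sup_comm I _ ▸ hg)
  exact ⟨t, by simpa using I.neg_mem hb⟩

namespace TateStmt

variable {n : ℕ} {O : Type*} [CommRing O] {π : O} {mo : MonomialOrder (Fin n)}
  {f g : MvPowerSeries (Fin n) O} {m m' : TMon n}

theorem monomial_mem_tateAlgebra (i : Fin n →₀ ℕ) (c : O) :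
    monomial i c ∈ TateAlgebra n O π := by
  intro N
  refine (Set.finite_singleton i).subset fun j hj => ?_
  by_contra hji
  exact hj (by simp [coeff_monomial, show j ≠ i from hji])

theorem exists_monMul_eq_of_monDvd {a b : TMon n} (h : monDvd a b) : ∃ t, monMul t a = b :=
  ⟨monDiv b a, Prod.ext (Nat.sub_add_cancel h.1) (tsub_add_cancel_of_le h.2)⟩

theorem fst_le_of_termLE (h : termLE mo m' m) : m.1 ≤ m'.1 := by
  rcases h with rfl | h | ⟨h, -⟩ <;> omega

theorem termLT_asymm (h : termLT mo m' m) : ¬ termLT mo m m' := by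
  rcases h with h | ⟨h, h'⟩ <;> rintro (h'' | ⟨h'', h'''⟩)
  · omega
  · omega
  · omega
  · exact lt_asymm h' h'''

theorem DvdAll.mul_right {N : ℕ} (h : DvdAll π N f) (g : MvPowerSeries (Fin n) O) :
    DvdAll π N (f * g) := fun i => by
  rw [coeff_mul]
  exact Finset.dvd_sum fun p _ => (h p.1).mul_right _

theorem IsTerm.le_of_dvdAll {N : ℕ} (ht : IsTerm π f m) (h : DvdAll π N f) : N ≤ m.1 := by
  by_contra hN
  exact ht.2 ((pow_dvd_pow π (by omega)).trans (h m.2))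

theorem exists_isTerm_of_not_pow_dvd {N : ℕ} {i : Fin n →₀ ℕ} (h : ¬ π ^ N ∣ coeff i f) :
    ∃ a < N, IsTerm π f (a, i) :=
  Nat.exists_lt_and_not_succ (P := fun a => π ^ a ∣ coeff i f) (by simp) h

theorem not_isLM_zero : ¬ IsLM π mo 0 m := fun h => h.1.2 (by simp)

theorem IsLM.unique_s6 (h : IsLM π mo f m) (h' : IsLM π mo f m') : m = m' := by
  rcases h.2 m' h'.1 with h₁ | h₁
  · exact h₁.symm
  rcases h'.2 m h.1 with h₂ | h₂
  · exact h₂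
  exact absurd h₂ (termLT_asymm h₁)

theorem IsLM.dvdAll (h : IsLM π mo f m) : DvdAll π m.1 f := by
  intro i
  by_contra hi
  obtain ⟨a, ha, hterm⟩ := exists_isTerm_of_not_pow_dvd hi
  exact (fst_le_of_termLE (h.2 _ hterm)).not_gt ha

theorem IsLM.pow_succ_dvd_coeff (h : IsLM π mo f m) {i : Fin n →₀ ℕ}
    (hi : mo.toSyn m.2 < mo.toSyn i) : π ^ (m.1 + 1) ∣ coeff i f := by
  by_contra hdvd
  rcases h.2 (m.1, i) ⟨h.dvdAll i, hdvd⟩ with heq | hlt | ⟨-, hlt⟩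
  · exact hi.ne' (congrArg (fun x => mo.toSyn x.2) heq)
  · exact lt_irrefl _ hlt
  · exact lt_asymm hlt hi

def TermsLE (π : O) (mo : MonomialOrder (Fin n)) (f : MvPowerSeries (Fin n) O) (m : TMon n) :
    Prop :=
  DvdAll π m.1 f ∧ ∀ i, mo.toSyn m.2 < mo.toSyn i → π ^ (m.1 + 1) ∣ coeff i f

theorem IsLM.termsLE (h : IsLM π mo f m) : TermsLE π mo f m :=
  ⟨h.dvdAll, fun _ => h.pow_succ_dvd_coeff⟩

theorem TermsLE.of_dvdAll (h : DvdAll π (m.1 + 1) f) : TermsLE π mo f m :=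
  ⟨fun i => (pow_dvd_pow π m.1.le_succ).trans (h i), fun i _ => h i⟩

theorem TermsLE.sub (hf : TermsLE π mo f m) (hg : TermsLE π mo g m) :
    TermsLE π mo (f - g) m :=
  ⟨fun i => by simpa only [map_sub] using dvd_sub (hf.1 i) (hg.1 i),
    fun i hi => by simpa only [map_sub] using dvd_sub (hf.2 i hi) (hg.2 i hi)⟩

theorem TermsLE.monomial_mul (h : TermsLE π mo f m) (c : O) (t : TMon n) :
    TermsLE π mo (monomial t.2 (c * π ^ t.1) * f) (monMul t m) := by
  refine ⟨fun i => ?_, fun i hi => ?_⟩ <;> rw [coeff_monomial_mul] <;> split_ifs with hti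
  · rw [monMul, pow_add]
    exact mul_dvd_mul (dvd_mul_left _ _) (h.1 _)
  · exact dvd_zero _
  · have hi' : mo.toSyn m.2 < mo.toSyn (i - t.2) := by
      rw [monMul, map_add, ← add_tsub_cancel_of_le hti, map_add] at hi
      exact lt_of_add_lt_add_left hi
    rw [monMul, add_assoc, pow_add]
    exact mul_dvd_mul (dvd_mul_left _ _) (h.2 _ hi')
  · exact dvd_zero _

theorem TermsLE.termLE_of_isTerm (h : TermsLE π mo f m) (ht : IsTerm π f m') :
    termLE mo m' m := by
  obtain ⟨a, i⟩ := m'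
  rcases (ht.le_of_dvdAll h.1).lt_or_eq with ha | rfl
  · exact Or.inr (Or.inl ha)
  rcases lt_trichotomy (mo.toSyn i) (mo.toSyn m.2) with hi | hi | hi
  · exact Or.inr (Or.inr ⟨rfl, hi⟩)
  · exact Or.inl (Prod.ext rfl (mo.toSyn.injective hi))
  · exact absurd (h.2 i hi) ht.2

theorem TermsLE.isLM (h : TermsLE π mo f m) (hm : IsTerm π f m) : IsLM π mo f m :=
  ⟨hm, fun _ => h.termLE_of_isTerm⟩

theorem TermsLE.termLT_of_isLM (h : TermsLE π mo f m) (htop : coeff m.2 f = 0)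
    (hm' : IsLM π mo f m') : termLT mo m' m := by
  rcases h.termLE_of_isTerm hm'.1 with rfl | hlt
  · exact absurd (htop ▸ dvd_zero _) hm'.1.2
  · exact hlt

theorem IsLM.sub_of_dvdAll (hf : IsLM π mo f m) (hg : DvdAll π (m.1 + 1) g) :
    IsLM π mo (f - g) m := by
  refine (hf.termsLE.sub (.of_dvdAll hg)).isLM ⟨?_, fun hdvd => hf.1.2 ?_⟩
  · simpa only [map_sub] using dvd_sub hf.1.1 ((pow_dvd_pow π m.1.le_succ).trans (hg m.2))
  · simpa only [map_sub, sub_add_cancel] using dvd_add hdvd (hg m.2)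

theorem dvdAll_or_exists_isLM (mo : MonomialOrder (Fin n)) (u : TateAlgebra n O π) (N : ℕ) :
    DvdAll π N (u : MvPowerSeries (Fin n) O) ∨ ∃ m, IsLM π mo u m ∧ m.1 < N := by
  by_cases hN : DvdAll π N (u : MvPowerSeries (Fin n) O)
  · exact Or.inl hN
  obtain ⟨a, haN, ha, ha'⟩ := Nat.exists_lt_and_not_succ
    (P := fun a => DvdAll π a (u : MvPowerSeries (Fin n) O)) (fun i => by simp) hN
  obtain ⟨i, hi⟩ : ∃ i, ¬ π ^ (a + 1) ∣ coeff i (u : MvPowerSeries (Fin n) O) := by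
    simpa [DvdAll] using ha'
  obtain ⟨i₀, hi₀, hmax⟩ := Set.exists_max_image _ mo.toSyn (u.2 (a + 1)) ⟨i, hi⟩
  refine Or.inr ⟨(a, i₀), TermsLE.isLM ⟨ha, fun j hj => ?_⟩ ⟨ha i₀, hi₀⟩, haN⟩
  by_contra hj'
  exact (hmax j hj').not_gt hj

theorem toLex_lt_of_termLT {N : ℕ} (h : termLT mo m' m) (hN : m'.1 < N) :
    toLex (N - m'.1, mo.toSyn m'.2) < toLex (N - m.1, mo.toSyn m.2) := by
  rw [Prod.Lex.toLex_lt_toLex]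
  rcases h with h | ⟨h, h'⟩
  · left
    dsimp only
    omega
  · exact Or.inr ⟨by rw [h], h'⟩

theorem snd_mem_sup_span_of_mem_sigMod {I0 : Ideal (TateAlgebra n O π)}
    {f : TateAlgebra n O π} {p : TateAlgebra n O π × TateAlgebra n O π}
    (hp : p ∈ SigMod I0 f) : p.2 ∈ I0 ⊔ Ideal.span {f} := by
  rw [show p.2 = p.1 * f - (p.1 * f - p.2) by ring]
  exact sub_mem (Ideal.mem_sup_right (Ideal.mem_span_singleton'.mpr ⟨p.1, rfl⟩))
    (Ideal.mem_sup_left hp)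

section DVR

variable [IsDomain O] [IsDiscreteValuationRing O]

theorem IsLM.exists_termLT_sub_mul (hπ : Irreducible π) {u q : TateAlgebra n O π}
    {mu mq : TMon n} (hu : IsLM π mo u mu) (hq : IsLM π mo q mq) (hd : monDvd mq mu) :
    ∃ t : TateAlgebra n O π, ∀ m, IsLM π mo ↑(u - t * q) m → termLT mo m mu := by
  obtain ⟨t, rfl⟩ := exists_monMul_eq_of_monDvd hd
  obtain ⟨w₁, hw₁⟩ := hu.1.1
  obtain ⟨w₂, hw₂⟩ := hq.1.1
  have hw₂π : ¬ π ∣ w₂ := fun ⟨d, hd⟩ => hq.1.2 ⟨d, by rw [hw₂, hd, pow_succ, mul_assoc]⟩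
  obtain ⟨w₂', hw₂'⟩ := (hπ.isUnit_of_not_dvd hw₂π).exists_left_inv
  refine ⟨⟨monomial t.2 (w₁ * w₂' * π ^ t.1), monomial_mem_tateAlgebra _ _⟩, fun m hm => ?_⟩
  refine (hu.termsLE.sub (hq.termsLE.monomial_mul _ t)).termLT_of_isLM ?_ hm
  simp only [monMul] at hw₁ ⊢
  rw [map_sub, coeff_monomial_mul, if_pos le_self_add, add_tsub_cancel_left, hw₁, hw₂]
  linear_combination (-(π ^ (t.1 + mq.1)) * w₁) * hw₂'

theorem exists_sub_mem_dvdAll (hπ : Irreducible π) {J : Ideal (TateAlgebra n O π)}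
    {u₀ : TateAlgebra n O π}
    (hred : ∀ u, u - u₀ ∈ J → ∀ mu, IsLM π mo u mu →
      ∃ q ∈ J, ∃ mq, IsLM π mo q mq ∧ monDvd mq mu) (N : ℕ) :
    ∃ u, u - u₀ ∈ J ∧ DvdAll π N (u : MvPowerSeries (Fin n) O) := by
  -- on valuations `< N` the term order is `(N - mu.1, mu.2)` in lex order, a well-order
  suffices H : ∀ k : ℕ ×ₗ mo.syn, ∀ u, u - u₀ ∈ J → ∀ mu, IsLM π mo u mu → mu.1 < N →
      toLex (N - mu.1, mo.toSyn mu.2) = k →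
      ∃ u', u' - u₀ ∈ J ∧ DvdAll π N (u' : MvPowerSeries (Fin n) O) by
    rcases dvdAll_or_exists_isLM mo u₀ N with h | ⟨mu, hmu, hN⟩
    · exact ⟨u₀, by simp, h⟩
    · exact H _ u₀ (by simp) mu hmu hN rfl
  intro k
  induction k using WellFoundedLT.induction with
  | _ k IH =>
  rintro u hu mu hmu hN rfl
  obtain ⟨q, hqJ, mq, hmq, hdvd⟩ := hred u hu mu hmu
  obtain ⟨t, hlt⟩ := hmu.exists_termLT_sub_mul hπ hmq hdvd
  have hu' : u - t * q - u₀ ∈ J := by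
    rw [sub_right_comm]
    exact J.sub_mem hu (J.mul_mem_left t hqJ)
  rcases dvdAll_or_exists_isLM mo (u - t * q) N with h | ⟨mu', hmu', hN'⟩
  · exact ⟨_, hu', h⟩
  · exact IH _ (toLex_lt_of_termLT (hlt mu' hmu') hN') _ hu' mu' hmu' hN' rfl

end DVR

end TateStmt


open TateStmt MvPowerSeries

variable {n : ℕ} {O : Type*} [CommRing O] [IsDomain O] [IsDiscreteValuationRing O]

/-- if `G` is a strong Gröbner basis of `M = {(u,v) : u f - v ∈ I₀}`, then
`{v : (u,v) ∈ G for some u}` is a Gröbner basis of `I = I₀ + ⟨f⟩`. -/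
theorem statement_6 (π : O) (hπ : Irreducible π) (mo : MonomialOrder (Fin n))
    (I0 : Ideal (TateAlgebra n O π)) (f : TateAlgebra n O π)
    (G : Set (TateAlgebra n O π × TateAlgebra n O π))
    (hSGB : IsSGB π mo I0 f G) :
    IsGB π mo {v : TateAlgebra n O π | ∃ u, (u, v) ∈ G}
      (I0 ⊔ Ideal.span {f}) := by
  obtain ⟨-, hGM, hGtop⟩ := hSGB
  refine ⟨fun v ⟨u, huv⟩ => snd_mem_sup_span_of_mem_sigMod (hGM huv), fun g hg hg0 mg hmg => ?_⟩
  by_contra! hcon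
  obtain ⟨t₀, ht₀⟩ := Ideal.exists_mul_sub_mem_of_mem_sup_span_singleton hg
  have hcoset : ∀ u, u - t₀ ∈ I0.colon {f} ↔ u * f - g ∈ I0 := fun u => by
    rw [Submodule.mem_colon_singleton, smul_eq_mul, ← I0.add_mem_iff_left ht₀,
      show (u - t₀) * f + (t₀ * f - g) = u * f - g by ring]
  have hne : ∀ u v : TateAlgebra n O π, (v : MvPowerSeries (Fin n) O) ≠ 0 → (u, v) ≠ 0 :=
    fun u v hv h => hv (by rw [(Prod.mk_eq_zero.mp h).2]; rfl)
  -- a top-reduction of `(u, g)` cannot act on `g`, so it is by a syzygy `(q, 0)`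
  have hred : ∀ u, u - t₀ ∈ I0.colon {f} → ∀ mu, IsLM π mo u mu →
      ∃ q ∈ I0.colon {f}, ∃ mq, IsLM π mo q mq ∧ monDvd mq mu := by
    intro u hu mu hmu
    obtain ⟨q, hqG, hq⟩ := hGtop _ ((hcoset u).mp hu) (hne u g hg0)
    rcases hq with ⟨hq0, mu', mq, hmu', hmq, hdvd⟩ | ⟨-, -, m₁, m₂, hm₁, hm₂, hdvd, -⟩
    · have hq : q.1 * f - q.2 ∈ I0 := hGM hqG
      rw [hq0, sub_zero] at hq
      exact ⟨q.1, by simpa using hq, mq, hmq, hmu'.unique_s6 hmu ▸ hdvd⟩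
    · exact absurd (hm₁.unique_s6 hmg ▸ hdvd) (hcon q.2 ⟨q.1, hqG⟩ m₂ hm₂)
  obtain ⟨u, hu, hval⟩ := exists_sub_mem_dvdAll hπ hred (mg.1 + 1)
  have hLM : IsLM π mo ↑(g - u * f) mg := hmg.sub_of_dvdAll (hval.mul_right _)
  have hmem : ((0 : TateAlgebra n O π), g - u * f) ∈ SigMod I0 f := by
    change 0 * f - (g - u * f) ∈ I0
    convert (hcoset u).mp hu using 1
    ring
  obtain ⟨q, hqG, hq⟩ := hGtop _ hmem (hne 0 _ fun h => not_isLM_zero (h ▸ hLM))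
  rcases hq with ⟨-, mu, -, hmu, -⟩ | ⟨-, -, m₁, m₂, hm₁, hm₂, hdvd, -⟩
  · exact not_isLM_zero hmu
  · exact hcon q.2 ⟨q.1, hqG⟩ m₂ hm₂ (hm₁.unique_s6 hLM ▸ hdvd)
end
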